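/- arXiv:1502.02049 — 6 statements merged into one kernel-verified Lean document; each statement's English description precedes it below -/
import Mathlib

section
/- Let N ≥ 1 and let ψ, φ : ℝ → ℂ be such that the functions t ↦ t^k·ψ(t) and t ↦ t^k·φ(t) are integrable for every k with 0 ≤ k ≤ N-1, and suppose 𝓕φ(ω) = -i·sgn(ω)·𝓕ψ(ω) for every ω ∈ ℝ (i.e., φ is a Hilbert transform pair of ψ). If ψ has N vanishing moments, i.e. ∫ℝ t^k·ψ(t) dt = 0 for every k with 0 ≤ k ≤ N-1, then φ also has N vanishing moments: ∫ℝ t^k·φ(t) dt = 0 for every k with 0 ≤ k ≤ N-1. (Proposition 2: the Hilbert transform of a wavelet with N vanishing moments has at least N vanishing moments.) -/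
/-!
The `k`-th derivative of `𝓕 f` at `0` is `(-2πi)^k` times the `k`-th moment of `f`, and it is
continuous. For a Hilbert pair, `𝓕 φ = 𝓕 (-i ψ)` on `(0, ∞)`, so the `k`-th derivatives of the two
transforms agree there, hence at `0` by continuity; thus `M_k[φ] = -i M_k[ψ] = 0`.
-/

open MeasureTheory FourierTransform Set Complex

noncomputable def moment (n : ℕ) (f : ℝ → ℂ) : ℂ := ∫ t : ℝ, (t : ℂ) ^ n * f t

def HasIntegrableMoments (k : ℕ) (f : ℝ → ℂ) : Prop :=
  ∀ i ≤ k, Integrable (fun t : ℝ ↦ (t : ℂ) ^ i * f t)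

lemma fourier_const_mul (c : ℂ) (f : ℝ → ℂ) (w : ℝ) :
    𝓕 (fun t ↦ c * f t) w = c * 𝓕 f w := by
  simp only [Real.fourier_eq, Circle.smul_def, smul_eq_mul, ← integral_const_mul]
  congr 1 with v
  ring

lemma moment_const_mul (n : ℕ) (c : ℂ) (f : ℝ → ℂ) :
    moment n (fun t ↦ c * f t) = c * moment n f := by
  simp only [moment, ← integral_const_mul]
  congr 1 with t
  ring

namespace HasIntegrableMoments

variable {k : ℕ} {f : ℝ → ℂ}

lemma mono {j : ℕ} (hf : HasIntegrableMoments k f) (hjk : j ≤ k) : HasIntegrableMoments j f :=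
  fun i hi ↦ hf i (hi.trans hjk)

lemma const_mul (hf : HasIntegrableMoments k f) (c : ℂ) :
    HasIntegrableMoments k (fun t ↦ c * f t) := fun i hi ↦
  ((hf i hi).const_mul c).congr <| .of_forall fun t ↦ by ring

lemma integrable_pow_smul (hf : HasIntegrableMoments k f) (i : ℕ) (hi : (i : ℕ∞) ≤ k) :
    Integrable (fun x : ℝ ↦ x ^ i • f x) :=
  (hf i (mod_cast hi)).congr <| .of_forall fun x ↦ by simp [Complex.real_smul]

lemma iteratedDeriv_fourier (hf : HasIntegrableMoments k f) :
    iteratedDeriv k (𝓕 f) = 𝓕 (fun x : ℝ ↦ (-2 * Real.pi * I * x) ^ k • f x) :=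
  Real.iteratedDeriv_fourier hf.integrable_pow_smul le_rfl

lemma continuous_iteratedDeriv_fourier (hf : HasIntegrableMoments k f) :
    Continuous (iteratedDeriv k (𝓕 f)) := by
  rw [hf.iteratedDeriv_fourier]
  refine VectorFourier.fourierIntegral_continuous Real.continuous_fourierChar
    continuous_inner (((hf k le_rfl).const_mul ((-2 * Real.pi * I) ^ k)).congr ?_)
  exact .of_forall fun x ↦ by simp only [smul_eq_mul]; ring

lemma iteratedDeriv_fourier_zero (hf : HasIntegrableMoments k f) :
    iteratedDeriv k (𝓕 f) 0 = (-2 * Real.pi * I) ^ k * moment k f := by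
  rw [hf.iteratedDeriv_fourier, Real.fourier_eq, moment, ← integral_const_mul]
  refine integral_congr_ae (.of_forall fun x ↦ ?_)
  simp only [inner_zero_right, neg_zero, AddChar.map_zero_eq_one, one_smul, smul_eq_mul]
  ring

end HasIntegrableMoments

lemma moment_eq_of_eqOn_Ioi_fourier {k : ℕ} {f g : ℝ → ℂ}
    (hf : HasIntegrableMoments k f) (hg : HasIntegrableMoments k g)
    (hfg : EqOn (𝓕 f) (𝓕 g) (Ioi 0)) :
    moment k f = moment k g := by
  have hderiv : EqOn (iteratedDeriv k (𝓕 f)) (iteratedDeriv k (𝓕 g)) (Ioi 0) := fun x hx ↦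
    Filter.EventuallyEq.iteratedDeriv_eq k (Filter.eventually_of_mem (Ioi_mem_nhds hx) hfg)
  have hzero := hderiv.closure hf.continuous_iteratedDeriv_fourier
    hg.continuous_iteratedDeriv_fourier (by simp : (0 : ℝ) ∈ closure (Ioi 0))
  rw [hf.iteratedDeriv_fourier_zero, hg.iteratedDeriv_fourier_zero] at hzero
  refine mul_left_cancel₀ (pow_ne_zero _ ?_) hzero
  simp [Real.pi_ne_zero, I_ne_zero]

theorem stmt_6_general (N : ℕ) (ψ φ : ℝ → ℂ)
    (hψ : ∀ k : ℕ, k ≤ N - 1 → Integrable (fun t : ℝ => (t : ℂ) ^ k * ψ t))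
    (hφ : ∀ k : ℕ, k ≤ N - 1 → Integrable (fun t : ℝ => (t : ℂ) ^ k * φ t))
    (h : ∀ ω : ℝ, 𝓕 φ ω = -Complex.I * (Real.sign ω : ℂ) * 𝓕 ψ ω)
    (hm : ∀ k : ℕ, k ≤ N - 1 → ∫ t : ℝ, (t : ℂ) ^ k * ψ t = 0) :
    ∀ k : ℕ, k ≤ N - 1 → ∫ t : ℝ, (t : ℂ) ^ k * φ t = 0 := by
  intro k hk
  have hfourier : EqOn (𝓕 φ) (𝓕 fun t ↦ -I * ψ t) (Ioi 0) := fun ω hω ↦ by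
    rw [h ω, fourier_const_mul, Real.sign_of_pos hω, ofReal_one, mul_one]
  have hmoment := moment_eq_of_eqOn_Ioi_fourier (HasIntegrableMoments.mono hφ hk)
    ((HasIntegrableMoments.mono hψ hk).const_mul (-I)) hfourier
  rwa [moment_const_mul, moment, moment, hm k hk, mul_zero] at hmoment

/-- Proposition 2: the Hilbert transform of a wavelet with `N` vanishing moments
has (at least) `N` vanishing moments. -/
theorem stmt_6 (N : ℕ) (hN : 1 ≤ N) (ψ φ : ℝ → ℂ)
    (hψ : ∀ k : ℕ, k ≤ N - 1 → Integrable (fun t : ℝ => (t : ℂ) ^ k * ψ t))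
    (hφ : ∀ k : ℕ, k ≤ N - 1 → Integrable (fun t : ℝ => (t : ℂ) ^ k * φ t))
    (h : ∀ ω : ℝ, 𝓕 φ ω = -Complex.I * (Real.sign ω : ℂ) * 𝓕 ψ ω)
    (hm : ∀ k : ℕ, k ≤ N - 1 → ∫ t : ℝ, (t : ℂ) ^ k * ψ t = 0) :
    ∀ k : ℕ, k ≤ N - 1 → ∫ t : ℝ, (t : ℂ) ^ k * φ t = 0 :=
  stmt_6_general N ψ φ hψ hφ h hm
end

section
/- Let ψ : ℝ → ℂ be integrable, square-integrable, and real-valued, with Fourier transform Ψ = 𝓕ψ. Then the Fourier-Like kernel Φ(ω) = (1/√2)·(1 - sgn(ω))·Ψ(ω) has the same energy in the frequency domain as Ψ: ∫ℝ ‖(1/√2)·(1 - sgn(ω))·Ψ(ω)‖² dω = ∫ℝ ‖Ψ(ω)‖² dω. (Energy part of Proposition 3: the Fourier-Like wavelet 𝓕-kernel (ψ - i·ℋψ)/√2 has the same energy as its generating wavelet ψ.) -/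
/-!
For real `ψ` the Fourier transform satisfies `𝓕ψ(-ω) = conj (𝓕ψ ω)`, so `‖𝓕ψ‖²` is even. The
weight `|(1 - sgn ω)/√2|²` equals `2` for `ω < 0` and `0` for `ω > 0`, so the left-hand energy is
twice the energy of `𝓕ψ` on the negative half-line, which by evenness is the total energy.
-/

open MeasureTheory FourierTransform ComplexConjugate Set

theorem Real.conj_fourier_apply (f : ℝ → ℂ) (w : ℝ) :
    conj (𝓕 f w) = 𝓕 (fun v ↦ conj (f v)) (-w) := by
  simp only [Real.fourier_real_eq, ← integral_conj, Circle.smul_def, smul_eq_mul, map_mul,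
    ← Circle.coe_inv_eq_conj, ← AddChar.map_neg_eq_inv, neg_neg, mul_neg]

theorem Real.norm_fourier_neg_of_im_eq_zero {f : ℝ → ℂ} (hf : ∀ t, (f t).im = 0) (w : ℝ) :
    ‖𝓕 f (-w)‖ = ‖𝓕 f w‖ := by
  have hconj : (fun v ↦ conj (f v)) = f := funext fun v ↦ Complex.conj_eq_iff_im.2 (hf v)
  rw [← RCLike.norm_conj (𝓕 f w), Real.conj_fourier_apply, hconj]

theorem lintegral_eq_two_mul_setLIntegral_Iio_of_even {g : ℝ → ENNReal}
    (hg : ∀ x, g (-x) = g x) : ∫⁻ x, g x = 2 * ∫⁻ x in Iio 0, g x := by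
  have hreflect : ∫⁻ x in Ioi 0, g x = ∫⁻ x in Iio 0, g x := by
    have := (Measure.measurePreserving_neg (volume : Measure ℝ)).setLIntegral_comp_preimage_emb
      (MeasurableEquiv.neg ℝ).measurableEmbedding g (Ioi 0)
    simp only [hg] at this
    rw [← this]
    simp
  rw [← lintegral_add_compl g measurableSet_Iio, compl_Iio, ← setLIntegral_congr Ioi_ae_eq_Ici,
    hreflect, two_mul]

theorem integral_eq_two_mul_setIntegral_Iio_of_even {g : ℝ → ℝ} (hg_nonneg : 0 ≤ g)
    (hg_meas : AEStronglyMeasurable g) (hg : ∀ x, g (-x) = g x) :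
    ∫ x, g x = 2 * ∫ x in Iio 0, g x := by
  rw [integral_eq_lintegral_of_nonneg_ae (.of_forall hg_nonneg) hg_meas,
    integral_eq_lintegral_of_nonneg_ae (.of_forall hg_nonneg) hg_meas.restrict,
    lintegral_eq_two_mul_setLIntegral_Iio_of_even (fun x ↦ by rw [hg]), ENNReal.toReal_mul]
  rfl

theorem norm_sq_one_sub_sign_mul_of_neg {ω : ℝ} (hω : ω < 0) (z : ℂ) :
    ‖(1 / Real.sqrt 2 : ℂ) * (1 - (Real.sign ω : ℂ)) * z‖ ^ 2 = 2 * ‖z‖ ^ 2 := by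
  have hsqrt : ‖(Real.sqrt 2 : ℂ)‖ ^ 2 = 2 := by
    rw [Complex.norm_real, Real.norm_eq_abs, sq_abs, Real.sq_sqrt zero_le_two]
  rw [Real.sign_of_neg hω, norm_mul, norm_mul, mul_pow, mul_pow, norm_div, div_pow, hsqrt]
  norm_num

theorem norm_sq_one_sub_sign_mul_of_pos {ω : ℝ} (hω : 0 < ω) (z : ℂ) :
    ‖(1 / Real.sqrt 2 : ℂ) * (1 - (Real.sign ω : ℂ)) * z‖ ^ 2 = 0 := by
  simp [Real.sign_of_pos hω]

theorem integral_norm_sq_one_sub_sign_mul {f : ℝ → ℂ} (hf : AEStronglyMeasurable f)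
    (hf_even : ∀ ω, ‖f (-ω)‖ = ‖f ω‖) :
    ∫ ω, ‖(1 / Real.sqrt 2 : ℂ) * (1 - (Real.sign ω : ℂ)) * f ω‖ ^ 2 = ∫ ω, ‖f ω‖ ^ 2 := by
  have hweight : (fun ω ↦ ‖(1 / Real.sqrt 2 : ℂ) * (1 - (Real.sign ω : ℂ)) * f ω‖ ^ 2)
      =ᵐ[volume] (Iio 0).indicator fun ω ↦ 2 * ‖f ω‖ ^ 2 := by
    filter_upwards [Measure.ae_ne volume 0] with ω hω
    rcases hω.lt_or_gt with hneg | hpos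
    · rw [indicator_of_mem (show ω ∈ Iio 0 from hneg), norm_sq_one_sub_sign_mul_of_neg hneg]
    · rw [indicator_of_notMem (notMem_Iio.2 hpos.le), norm_sq_one_sub_sign_mul_of_pos hpos]
  rw [integral_congr_ae hweight, integral_indicator measurableSet_Iio, integral_const_mul]
  exact (integral_eq_two_mul_setIntegral_Iio_of_even (g := fun ω ↦ ‖f ω‖ ^ 2)
    (fun ω ↦ sq_nonneg _) (hf.norm.pow 2) fun ω ↦ by rw [hf_even]).symm

theorem stmt_7_general (ψ : ℝ → ℂ)
    (hψ1 : Integrable ψ)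
    (hψreal : ∀ t : ℝ, (ψ t).im = 0) :
    ∫ ω : ℝ, ‖(1 / Real.sqrt 2 : ℂ) * ((1 : ℂ) - (Real.sign ω : ℂ)) * 𝓕 ψ ω‖ ^ 2
      = ∫ ω : ℝ, ‖𝓕 ψ ω‖ ^ 2 := by
  have hcont : Continuous (𝓕 ψ) :=
    VectorFourier.fourierIntegral_continuous Real.continuous_fourierChar
      (innerSL ℝ).continuous₂ hψ1
  exact integral_norm_sq_one_sub_sign_mul hcont.aestronglyMeasurable
    (Real.norm_fourier_neg_of_im_eq_zero hψreal)

/-- Energy part of Proposition 3: the Fourier-Like kernel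
`(1/√2)·(1 - sgn ω)·Ψ(ω)` has the same frequency-domain energy as `Ψ = 𝓕ψ`,
for `ψ` a real-valued wavelet. -/
theorem stmt_7 (ψ : ℝ → ℂ)
    (hψ1 : Integrable ψ) (hψ2 : MemLp ψ 2 (volume : Measure ℝ))
    (hψreal : ∀ t : ℝ, (ψ t).im = 0) :
    ∫ ω : ℝ, ‖(1 / Real.sqrt 2 : ℂ) * ((1 : ℂ) - (Real.sign ω : ℂ)) * 𝓕 ψ ω‖ ^ 2
      = ∫ ω : ℝ, ‖𝓕 ψ ω‖ ^ 2 :=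
  stmt_7_general ψ hψ1 hψreal
end

section
/- Let ψ : ℝ → ℂ be integrable, square-integrable, and real-valued, with Fourier transform Ψ = 𝓕ψ. Then the Fourier-Like kernel Φ(ω) = (1/√2)·(1 - sgn(ω))·Ψ(ω) has the same admissibility coefficient as Ψ: ∫ℝ ‖(1/√2)·(1 - sgn(ω))·Ψ(ω)‖²/|ω| dω = ∫ℝ ‖Ψ(ω)‖²/|ω| dω. (Admissibility part of Proposition 3.) -/
/-! Since `ψ` is real, `𝓕ψ(-ω) = conj (𝓕ψ ω)`, so `‖𝓕ψ ω‖² / |ω|` is even. The squared modulus of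
the factor `(1 - sgn ω) / √2` is `2` for `ω < 0` and `0` for `ω > 0`, so the left-hand side is twice
the integral over the negative half-line, which by evenness is the whole integral. -/

open MeasureTheory FourierTransform Set ComplexConjugate

theorem Real.fourier_neg_eq_conj_of_im_eq_zero {ψ : ℝ → ℂ} (hψ : ∀ t, (ψ t).im = 0) (ω : ℝ) :
    𝓕 ψ (-ω) = conj (𝓕 ψ ω) := by
  rw [Real.fourier_real_eq_integral_exp_smul, Real.fourier_real_eq_integral_exp_smul,
    ← integral_conj]
  congr 1 with t
  rw [smul_eq_mul, smul_eq_mul, map_mul, ← Complex.exp_conj,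
    Complex.conj_eq_iff_im.mpr (hψ t)]
  congr 2
  simp only [map_mul, Complex.conj_I, Complex.conj_ofReal]
  push_cast
  ring

theorem Function.Even.integral_eq_two_mul_integral_Iic {f : ℝ → ℝ} (hf : Function.Even f) :
    ∫ x, f x = 2 * ∫ x in Iic 0, f x :=
  calc ∫ x, f x = ∫ x, f |x| := by
        congr with x
        rcases abs_choice x with h | h
        · rw [h]
        · rw [h, hf]
    _ = 2 * ∫ x in Ioi 0, f x := integral_comp_abs
    _ = 2 * ∫ x in Ioi 0, f (-x) := by simp only [show ∀ x, f (-x) = f x from hf]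
    _ = 2 * ∫ x in Iic 0, f x := by rw [integral_comp_neg_Ioi, neg_zero]

theorem sq_norm_one_div_sqrt_two_mul_one_sub_sign_mul_div_abs (Ψ : ℝ → ℂ) :
    (fun ω : ℝ ↦ ‖(1 / Real.sqrt 2 : ℂ) * (1 - (Real.sign ω : ℂ)) * Ψ ω‖ ^ 2 / |ω|) =
      (Iio 0).indicator (fun ω ↦ 2 * (‖Ψ ω‖ ^ 2 / |ω|)) := by
  ext ω
  rcases lt_trichotomy ω 0 with h | rfl | h
  · rw [indicator_of_mem (show ω ∈ Iio 0 from h), Real.sign_of_neg h, norm_mul, norm_mul, mul_pow,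
      mul_pow, mul_div_assoc]
    norm_num [Complex.norm_real]
  · simp
  · rw [indicator_of_notMem (show ω ∉ Iio 0 from not_lt.mpr h.le), Real.sign_of_pos h]
    simp

theorem stmt_9_general (ψ : ℝ → ℂ)
    (hψreal : ∀ t : ℝ, (ψ t).im = 0) :
    ∫ ω : ℝ, ‖(1 / Real.sqrt 2 : ℂ) * ((1 : ℂ) - (Real.sign ω : ℂ)) * 𝓕 ψ ω‖ ^ 2 / |ω|
      = ∫ ω : ℝ, ‖𝓕 ψ ω‖ ^ 2 / |ω| := by
  set f : ℝ → ℝ := fun ω ↦ ‖𝓕 ψ ω‖ ^ 2 / |ω|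
  have hf : Function.Even f := fun ω ↦ by
    simp only [f, Real.fourier_neg_eq_conj_of_im_eq_zero hψreal, RCLike.norm_conj, abs_neg]
  calc _ = ∫ ω, (Iio 0).indicator (fun ω ↦ 2 * f ω) ω := by
        rw [sq_norm_one_div_sqrt_two_mul_one_sub_sign_mul_div_abs]
    _ = 2 * ∫ ω in Iic 0, f ω := by
        rw [integral_indicator measurableSet_Iio, integral_const_mul, integral_Iic_eq_integral_Iio]
    _ = ∫ ω, f ω := hf.integral_eq_two_mul_integral_Iic.symm

/-- Admissibility part of Proposition 3: the Fourier-Like kernel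
`(1/√2)·(1 - sgn ω)·Ψ(ω)` has the same admissibility coefficient as `Ψ = 𝓕ψ`. -/
theorem stmt_9 (ψ : ℝ → ℂ)
    (hψ1 : Integrable ψ) (hψ2 : MemLp ψ 2 (volume : Measure ℝ))
    (hψreal : ∀ t : ℝ, (ψ t).im = 0) :
    ∫ ω : ℝ, ‖(1 / Real.sqrt 2 : ℂ) * ((1 : ℂ) - (Real.sign ω : ℂ)) * 𝓕 ψ ω‖ ^ 2 / |ω|
      = ∫ ω : ℝ, ‖𝓕 ψ ω‖ ^ 2 / |ω| :=
  stmt_9_general ψ hψreal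
end

section
/- Let N ≥ 1 and let ψ, φ : ℝ → ℂ be such that t ↦ t^k·ψ(t) and t ↦ t^k·φ(t) are integrable for 0 ≤ k ≤ N-1, and suppose 𝓕φ(ω) = -i·sgn(ω)·𝓕ψ(ω) for every ω ∈ ℝ (i.e., φ is a Hilbert transform pair of ψ). If ∫ℝ t^k·ψ(t) dt = 0 for every k with 0 ≤ k ≤ N-1, then the Fourier-Like wavelet g(t) = (1/√2)·(ψ(t) - i·φ(t)) has N vanishing moments: ∫ℝ t^k·g(t) dt = 0 for every k with 0 ≤ k ≤ N-1. (Proposition 4.) -/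
open MeasureTheory FourierTransform Set

/-!
The `k`-th moment of an integrable function is, up to the factor `(-2πi)^k`, the `k`-th derivative
of its Fourier transform at `0`; with enough moments this derivative is continuous, so it is
determined by the Fourier transform on `(0, ∞)` alone. There the Hilbert pair relation reads
`𝓕φ = -i·𝓕ψ`, hence every moment of `φ` is `-i` times the corresponding moment of `ψ`, and the
moments of `ψ - iφ` vanish together with those of `ψ`.
-/

theorem iteratedDeriv_eq_of_eqOn_Ioi {E : Type*} [NormedAddCommGroup E] [NormedSpace ℝ E]
    {f g : ℝ → E} {k : ℕ} {a : ℝ} (hf : ContDiff ℝ k f) (hg : ContDiff ℝ k g)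
    (hfg : EqOn f g (Ioi a)) : iteratedDeriv k f a = iteratedDeriv k g a := by
  have hIoi : EqOn (iteratedDeriv k f) (iteratedDeriv k g) (Ioi a) :=
    hfg.iteratedDeriv_of_isOpen isOpen_Ioi k
  refine hIoi.of_subset_closure (hf.continuous_iteratedDeriv' k).continuousOn
    (hg.continuous_iteratedDeriv' k).continuousOn Ioi_subset_Ici_self (closure_Ioi a).ge
    self_mem_Ici

theorem fourier_const_smul_apply {E : Type*} [NormedAddCommGroup E] [NormedSpace ℂ E]
    (c : ℂ) (f : ℝ → E) (ω : ℝ) : 𝓕 (c • f) ω = c • 𝓕 f ω :=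
  congrFun (VectorFourier.fourierIntegral_const_smul _ _ _ f c) ω

section Moments

variable {f g : ℝ → ℂ} {k : ℕ}

theorem real_pow_smul_eq_ofReal_pow_mul (f : ℝ → ℂ) (n : ℕ) :
    (fun t : ℝ => t ^ n • f t) = fun t : ℝ => (t : ℂ) ^ n * f t := by
  ext t
  rw [Complex.real_smul, Complex.ofReal_pow]

theorem contDiff_fourier_of_integrable_moments
    (hf : ∀ n ≤ k, Integrable (fun t : ℝ => (t : ℂ) ^ n * f t)) : ContDiff ℝ k (𝓕 f) := by
  refine Real.contDiff_fourier fun n hn => ?_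
  convert (hf n (by exact_mod_cast hn)).norm using 2 with t
  simp

theorem iteratedDeriv_fourier_zero
    (hf : ∀ n ≤ k, Integrable (fun t : ℝ => (t : ℂ) ^ n * f t)) :
    iteratedDeriv k (𝓕 f) 0 = (-2 * Real.pi * Complex.I) ^ k * ∫ t : ℝ, (t : ℂ) ^ k * f t := by
  have hf' : ∀ n : ℕ, (n : ℕ∞) ≤ k → Integrable (fun t : ℝ => t ^ n • f t) := fun n hn => by
    rw [real_pow_smul_eq_ofReal_pow_mul]
    exact hf n (by exact_mod_cast hn)
  rw [Real.iteratedDeriv_fourier hf' le_rfl, Real.fourier_real_eq, ← integral_const_mul]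
  congr 1 with t
  simp only [mul_zero, neg_zero, AddChar.map_zero_eq_one, one_smul, smul_eq_mul]
  ring

theorem moment_eq_of_fourier_eqOn_Ioi
    (hf : ∀ n ≤ k, Integrable (fun t : ℝ => (t : ℂ) ^ n * f t))
    (hg : ∀ n ≤ k, Integrable (fun t : ℝ => (t : ℂ) ^ n * g t))
    (hfg : EqOn (𝓕 f) (𝓕 g) (Ioi 0)) :
    ∫ t : ℝ, (t : ℂ) ^ k * f t = ∫ t : ℝ, (t : ℂ) ^ k * g t := by
  have h := iteratedDeriv_eq_of_eqOn_Ioi (contDiff_fourier_of_integrable_moments hf)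
    (contDiff_fourier_of_integrable_moments hg) hfg
  rw [iteratedDeriv_fourier_zero hf, iteratedDeriv_fourier_zero hg] at h
  refine mul_left_cancel₀ (pow_ne_zero k ?_) h
  simp [Real.pi_ne_zero, Complex.I_ne_zero]

theorem moment_eq_neg_I_mul_of_fourier_eq_neg_I_mul_sign {ψ φ : ℝ → ℂ}
    (hψ : ∀ n ≤ k, Integrable (fun t : ℝ => (t : ℂ) ^ n * ψ t))
    (hφ : ∀ n ≤ k, Integrable (fun t : ℝ => (t : ℂ) ^ n * φ t))
    (h : ∀ ω : ℝ, 𝓕 φ ω = -Complex.I * (Real.sign ω : ℂ) * 𝓕 ψ ω) :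
    ∫ t : ℝ, (t : ℂ) ^ k * φ t = -Complex.I * ∫ t : ℝ, (t : ℂ) ^ k * ψ t := by
  have hIψ : ∀ n ≤ k, Integrable (fun t : ℝ => (t : ℂ) ^ n * (-Complex.I • ψ) t) := fun n hn => by
    simpa only [Pi.smul_apply, smul_eq_mul, mul_left_comm] using (hψ n hn).const_mul (-Complex.I)
  have hfourier : EqOn (𝓕 φ) (𝓕 (-Complex.I • ψ)) (Ioi 0) := fun ω hω => by
    rw [h ω, fourier_const_smul_apply, Real.sign_of_pos hω]
    simp
  rw [moment_eq_of_fourier_eqOn_Ioi hφ hIψ hfourier, ← integral_const_mul]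
  simp only [Pi.smul_apply, smul_eq_mul, mul_left_comm]

end Moments

theorem stmt_10_general (N : ℕ) (ψ φ : ℝ → ℂ)
    (hψ : ∀ k : ℕ, k ≤ N - 1 → Integrable (fun t : ℝ => (t : ℂ) ^ k * ψ t))
    (hφ : ∀ k : ℕ, k ≤ N - 1 → Integrable (fun t : ℝ => (t : ℂ) ^ k * φ t))
    (h : ∀ ω : ℝ, 𝓕 φ ω = -Complex.I * (Real.sign ω : ℂ) * 𝓕 ψ ω)
    (hm : ∀ k : ℕ, k ≤ N - 1 → ∫ t : ℝ, (t : ℂ) ^ k * ψ t = 0) :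
    ∀ k : ℕ, k ≤ N - 1 →
      ∫ t : ℝ, (t : ℂ) ^ k * ((1 / Real.sqrt 2 : ℂ) * (ψ t - Complex.I * φ t)) = 0 := by
  intro k hk
  have hψk : ∀ n ≤ k, Integrable (fun t : ℝ => (t : ℂ) ^ n * ψ t) := fun n hn => hψ n (hn.trans hk)
  have hφk : ∀ n ≤ k, Integrable (fun t : ℝ => (t : ℂ) ^ n * φ t) := fun n hn => hφ n (hn.trans hk)
  have hφm : ∫ t : ℝ, (t : ℂ) ^ k * φ t = 0 := by
    rw [moment_eq_neg_I_mul_of_fourier_eq_neg_I_mul_sign hψk hφk h, hm k hk, mul_zero]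
  have hsplit : (fun t : ℝ => (t : ℂ) ^ k * ((1 / Real.sqrt 2 : ℂ) * (ψ t - Complex.I * φ t)))
      = fun t : ℝ => (1 / Real.sqrt 2 : ℂ) * ((t : ℂ) ^ k * ψ t)
        - ((1 / Real.sqrt 2 : ℂ) * Complex.I) * ((t : ℂ) ^ k * φ t) := by
    ext t; ring
  rw [hsplit, integral_sub ((hψ k hk).const_mul _) ((hφ k hk).const_mul _),
    integral_const_mul, integral_const_mul, hm k hk, hφm, mul_zero, mul_zero, sub_zero]

/-- Proposition 4: the Fourier-Like wavelet `(1/√2)·(ψ - i·φ)` has the same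
`N` vanishing moments as its generating wavelet `ψ`. -/
theorem stmt_10 (N : ℕ) (hN : 1 ≤ N) (ψ φ : ℝ → ℂ)
    (hψ : ∀ k : ℕ, k ≤ N - 1 → Integrable (fun t : ℝ => (t : ℂ) ^ k * ψ t))
    (hφ : ∀ k : ℕ, k ≤ N - 1 → Integrable (fun t : ℝ => (t : ℂ) ^ k * φ t))
    (h : ∀ ω : ℝ, 𝓕 φ ω = -Complex.I * (Real.sign ω : ℂ) * 𝓕 ψ ω)
    (hm : ∀ k : ℕ, k ≤ N - 1 → ∫ t : ℝ, (t : ℂ) ^ k * ψ t = 0) :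
    ∀ k : ℕ, k ≤ N - 1 →
      ∫ t : ℝ, (t : ℂ) ^ k * ((1 / Real.sqrt 2 : ℂ) * (ψ t - Complex.I * φ t)) = 0 :=
  stmt_10_general N ψ φ hψ hφ h hm
end

section
/- Let ψ : ℝ → ℂ be integrable and square-integrable, with Fourier transform Ψ = 𝓕ψ, and let ε ∈ {1, -1}. Then the Hartley-Like kernel Φ(ω) = (1/√2)·(1 + ε·i·sgn(ω))·Ψ(ω) has the same energy in the frequency domain as Ψ: ∫ℝ ‖(1/√2)·(1 + ε·i·sgn(ω))·Ψ(ω)‖² dω = ∫ℝ ‖Ψ(ω)‖² dω. (Energy part of Proposition 5: the Hartley-Like wavelet (ψ ∓ ℋψ)/√2 has the same energy as its generating wavelet ψ.) -/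
open MeasureTheory FourierTransform

/-! A unimodular multiplier preserves energy. The Hartley-like multiplier
`(1 + ε i sgn ω)/√2` has modulus one for every `ω ≠ 0`, since `|1 ± i| = √2`, and the
single point `ω = 0` is Lebesgue-null. -/

theorem integral_norm_mul_pow_of_ae_norm_eq_one {α 𝕜 : Type*} [MeasurableSpace α]
    {μ : Measure α} [NormedDivisionRing 𝕜] {m f : α → 𝕜} (hm : ∀ᵐ x ∂μ, ‖m x‖ = 1) (n : ℕ) :
    ∫ x, ‖m x * f x‖ ^ n ∂μ = ∫ x, ‖f x‖ ^ n ∂μ :=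
  integral_congr_ae <| hm.mono fun x hx => by simp only [norm_mul, hx, one_mul]

theorem Complex.norm_one_add_mul_I_div_sqrt_two {t : ℝ} (ht : |t| = 1) :
    ‖(1 / Real.sqrt 2 : ℂ) * (1 + t * I)‖ = 1 := by
  have hsq : t ^ 2 = 1 := by rw [← sq_abs, ht, one_pow]
  have h1 : ‖(1 : ℂ) + t * I‖ = Real.sqrt 2 := by
    simpa [hsq, one_add_one_eq_two] using norm_add_mul_I 1 t
  rw [norm_mul, h1, norm_div, norm_one, norm_real, Real.norm_of_nonneg (Real.sqrt_nonneg 2),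
    one_div_mul_cancel (by positivity)]

theorem Real.abs_sign_of_ne_zero {x : ℝ} (hx : x ≠ 0) : |Real.sign x| = 1 := by
  rcases Real.sign_apply_eq_of_ne_zero x hx with h | h <;> simp [h]

theorem stmt_11_general (ψ : ℝ → ℂ)
    (ε : ℝ) (hε : ε = 1 ∨ ε = -1) :
    ∫ ω : ℝ, ‖(1 / Real.sqrt 2 : ℂ) * ((1 : ℂ) + (ε : ℂ) * Complex.I * (Real.sign ω : ℂ)) * 𝓕 ψ ω‖ ^ 2
      = ∫ ω : ℝ, ‖𝓕 ψ ω‖ ^ 2 := by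
  have habs : |ε| = 1 := by rcases hε with rfl | rfl <;> simp
  refine integral_norm_mul_pow_of_ae_norm_eq_one ?_ 2
  filter_upwards [volume.ae_ne 0] with ω hω
  have hmul : (ε : ℂ) * Complex.I * (Real.sign ω : ℂ) =
      ((ε * Real.sign ω : ℝ) : ℂ) * Complex.I := by
    push_cast; ring
  rw [hmul]
  exact Complex.norm_one_add_mul_I_div_sqrt_two <| by
    rw [abs_mul, habs, Real.abs_sign_of_ne_zero hω, one_mul]

/-- Energy part of Proposition 5: the Hartley-Like kernel
`(1/√2)·(1 + ε·i·sgn ω)·Ψ(ω)` (with `ε = ±1`) has the same frequency-domain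
energy as `Ψ = 𝓕ψ`. -/
theorem stmt_11 (ψ : ℝ → ℂ)
    (hψ1 : Integrable ψ) (hψ2 : MemLp ψ 2 (volume : Measure ℝ))
    (ε : ℝ) (hε : ε = 1 ∨ ε = -1) :
    ∫ ω : ℝ, ‖(1 / Real.sqrt 2 : ℂ) * ((1 : ℂ) + (ε : ℂ) * Complex.I * (Real.sign ω : ℂ)) * 𝓕 ψ ω‖ ^ 2
      = ∫ ω : ℝ, ‖𝓕 ψ ω‖ ^ 2 :=
  stmt_11_general ψ ε hε
end

section
/- Let ψ : ℝ → ℂ be integrable and square-integrable, with Fourier transform Ψ = 𝓕ψ, and let ε ∈ {1, -1}. Then the Hartley-Like kernel Φ(ω) = (1/√2)·(1 + ε·i·sgn(ω))·Ψ(ω) has the same admissibility coefficient as Ψ: ∫ℝ ‖(1/√2)·(1 + ε·i·sgn(ω))·Ψ(ω)‖²/|ω| dω = ∫ℝ ‖Ψ(ω)‖²/|ω| dω. (Admissibility part of Proposition 5.) -/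
open MeasureTheory FourierTransform

/-! The multiplier `(1 + ε i sgn ω) / √2` has modulus one away from `ω = 0`, and the point
`ω = 0` contributes nothing since `x / |0| = 0`; so the two integrands agree everywhere. -/

lemma Complex.norm_one_add_ofReal_mul_I (t : ℝ) : ‖1 + (t : ℂ) * Complex.I‖ = √(1 + t ^ 2) := by
  rw [Complex.norm_def, Complex.normSq_apply]
  simp [sq]

lemma Complex.norm_inv_sqrt_two_mul_one_add_ofReal_mul_I {t : ℝ} (ht : t ^ 2 = 1) :
    ‖(1 / Real.sqrt 2 : ℂ) * (1 + (t : ℂ) * Complex.I)‖ = 1 := by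
  rw [norm_mul, Complex.norm_one_add_ofReal_mul_I, ht, one_add_one_eq_two, one_div, norm_inv,
    Complex.norm_real, Real.norm_of_nonneg (Real.sqrt_nonneg 2),
    inv_mul_cancel₀ (Real.sqrt_ne_zero'.2 two_pos)]

lemma Real.sign_sq_of_ne_zero {x : ℝ} (hx : x ≠ 0) : Real.sign x ^ 2 = 1 := by
  rcases hx.lt_or_gt with h | h
  · simp [Real.sign_of_neg h]
  · simp [Real.sign_of_pos h]

lemma integral_norm_mul_sq_div_abs_eq {m Ψ : ℝ → ℂ} (hm : ∀ ω ≠ 0, ‖m ω‖ = 1) :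
    ∫ ω, ‖m ω * Ψ ω‖ ^ 2 / |ω| = ∫ ω, ‖Ψ ω‖ ^ 2 / |ω| := by
  congr 1 with ω
  rcases eq_or_ne ω 0 with rfl | hω
  · simp
  · rw [norm_mul, hm ω hω, one_mul]

theorem stmt_13_general (ψ : ℝ → ℂ)
    (ε : ℝ) (hε : ε = 1 ∨ ε = -1) :
    ∫ ω : ℝ, ‖(1 / Real.sqrt 2 : ℂ) * ((1 : ℂ) + (ε : ℂ) * Complex.I * (Real.sign ω : ℂ)) * 𝓕 ψ ω‖ ^ 2 / |ω|
      = ∫ ω : ℝ, ‖𝓕 ψ ω‖ ^ 2 / |ω| := by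
  refine integral_norm_mul_sq_div_abs_eq fun ω hω => ?_
  have hε2 : ε ^ 2 = 1 := by rcases hε with rfl | rfl <;> norm_num
  have ht : (ε * Real.sign ω) ^ 2 = 1 := by rw [mul_pow, hε2, Real.sign_sq_of_ne_zero hω, one_mul]
  convert Complex.norm_inv_sqrt_two_mul_one_add_ofReal_mul_I ht using 4
  push_cast
  ring

/-- Admissibility part of Proposition 5: the Hartley-Like kernel
`(1/√2)·(1 + ε·i·sgn ω)·Ψ(ω)` (with `ε = ±1`) has the same admissibility
coefficient as `Ψ = 𝓕ψ`. -/
theorem stmt_13 (ψ : ℝ → ℂ)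
    (hψ1 : Integrable ψ) (hψ2 : MemLp ψ 2 (volume : Measure ℝ))
    (ε : ℝ) (hε : ε = 1 ∨ ε = -1) :
    ∫ ω : ℝ, ‖(1 / Real.sqrt 2 : ℂ) * ((1 : ℂ) + (ε : ℂ) * Complex.I * (Real.sign ω : ℂ)) * 𝓕 ψ ω‖ ^ 2 / |ω|
      = ∫ ω : ℝ, ‖𝓕 ψ ω‖ ^ 2 / |ω| :=
  stmt_13_general ψ ε hε
end
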